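/- Let g' ≥ 0, s ≥ 0, and e_1, ..., e_s ≥ 2 be integers. If the quantity E = 2g' - 2 + Σ_{i=1}^s (1 - 1/e_i) is strictly positive, then E ≥ 1/42. -/
import Mathlib

lemma inv_le_inv_nat {m n : ℕ} (hm : 0 < m) (h : m ≤ n) : (1:ℚ)/n ≤ 1/m := by
  apply one_div_le_one_div_of_le
  · exact_mod_cast hm
  · exact_mod_cast h

lemma inv_nat_pos {n : ℕ} (hn : 0 < n) : (0:ℚ) < 1/n := by
  have : (0:ℚ) < n := by exact_mod_cast hn
  positivity

lemma key_sorted (a b c : ℕ) (ha : 2 ≤ a) (hab : a ≤ b) (hbc : b ≤ c)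
    (h : (1:ℚ)/a + 1/b + 1/c < 1) : (1:ℚ)/a + 1/b + 1/c ≤ 41/42 := by
  have hb : 2 ≤ b := le_trans ha hab
  have hc : 2 ≤ c := le_trans hb hbc
  rcases Nat.lt_or_ge a 4 with ha4 | ha4
  · interval_cases a
    · -- a = 2
      rcases Nat.lt_or_ge b 5 with hb5 | hb5
      · interval_cases b
        · -- b = 2 : contradiction
          have := inv_nat_pos (show 0 < c by omega)
          norm_num at h
          linarith
        · -- b = 3, need c ≥ 7
          have h7 : 7 ≤ c := by
            by_contra hcon
            push_neg at hcon
            have := inv_le_inv_nat (show 0 < c by omega) (show c ≤ 6 by omega)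
            norm_num at h this ⊢
            linarith
          have := inv_le_inv_nat (show 0 < 7 by norm_num) h7
          norm_num at this ⊢
          linarith
        · -- b = 4, need c ≥ 5
          have h5 : 5 ≤ c := by
            by_contra hcon
            push_neg at hcon
            have := inv_le_inv_nat (show 0 < c by omega) (show c ≤ 4 by omega)
            norm_num at h this ⊢
            linarith
          have := inv_le_inv_nat (show 0 < 5 by norm_num) h5
          norm_num at this ⊢
          linarith
      · have h1 := inv_le_inv_nat (show 0 < 5 by norm_num) hb5
        have h2 := inv_le_inv_nat (show 0 < 5 by norm_num) (le_trans hb5 hbc)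
        norm_num at h1 h2 ⊢
        linarith
    · -- a = 3
      rcases Nat.lt_or_ge b 4 with hb4 | hb4
      · interval_cases b
        -- b = 3, need c ≥ 4
        have h4 : 4 ≤ c := by
          by_contra hcon
          push_neg at hcon
          have := inv_le_inv_nat (show 0 < c by omega) (show c ≤ 3 by omega)
          norm_num at h this ⊢
          linarith
        have := inv_le_inv_nat (show 0 < 4 by norm_num) h4
        norm_num at this ⊢
        linarith
      · have h1 := inv_le_inv_nat (show 0 < 4 by norm_num) hb4
        have h2 := inv_le_inv_nat (show 0 < 4 by norm_num) (le_trans hb4 hbc)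
        have h3 := inv_le_inv_nat (show 0 < 3 by norm_num) (show 3 ≤ 3 from le_refl 3)
        norm_num at h1 h2 ⊢
        linarith
  · have h1 := inv_le_inv_nat (show 0 < 4 by norm_num) ha4
    have h2 := inv_le_inv_nat (show 0 < 4 by norm_num) (le_trans ha4 hab)
    have h3 := inv_le_inv_nat (show 0 < 4 by norm_num) (le_trans (le_trans ha4 hab) hbc)
    norm_num at h1 h2 h3 ⊢
    linarith

lemma key_sym (a b c : ℕ) (ha : 2 ≤ a) (hb : 2 ≤ b) (hc : 2 ≤ c)
    (h : (1:ℚ)/a + 1/b + 1/c < 1) : (1:ℚ)/a + 1/b + 1/c ≤ 41/42 := by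
  rcases le_total a b with h1 | h1 <;> rcases le_total b c with h2 | h2 <;>
    rcases le_total a c with h3 | h3
  · linarith [key_sorted a b c ha h1 h2 (by linarith)]
  · linarith [key_sorted a b c ha h1 h2 (by linarith)]
  · linarith [key_sorted a c b ha h3 (by omega) (by linarith)]
  · linarith [key_sorted c a b hc h3 h1 (by linarith)]
  · linarith [key_sorted b a c hb h1 h3 (by linarith)]
  · linarith [key_sorted b c a hb h2 (by omega) (by linarith)]
  · linarith [key_sorted c b a hc h2 (by omega) (by linarith)]
  · linarith [key_sorted c b a hc h2 h1 (by linarith)]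

lemma term_lb {n : ℕ} (h : 2 ≤ n) : (1:ℚ)/2 ≤ 1 - 1/n := by
  have := inv_le_inv_nat (show 0 < 2 by norm_num) h
  norm_num at this ⊢
  linarith

lemma term_ub {n : ℕ} (h : 2 ≤ n) : (1:ℚ) - 1/n < 1 := by
  have := inv_nat_pos (show 0 < n by omega)
  linarith

/-- The minimum positive value of `2g' - 2 + ∑ (1 - 1/eᵢ)` over nonnegative
integers `g'`, `s` and integers `eᵢ ≥ 2` is `1/42`. -/
theorem hurwitz_min_positive (g' s : ℕ) (e : Fin s → ℕ) (he : ∀ i, 2 ≤ e i)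
    (E : ℚ) (hE : E = 2 * (g' : ℚ) - 2 + ∑ i, (1 - 1 / (e i : ℚ)))
    (hpos : 0 < E) : 1 / 42 ≤ E := by
  have hlb : ∀ i, (1:ℚ)/2 ≤ 1 - 1/(e i) := fun i => term_lb (he i)
  have hub : ∀ i, (1:ℚ) - 1/(e i) < 1 := fun i => term_ub (he i)
  have hsum_lb : (s:ℚ) * (1/2) ≤ ∑ i, (1 - 1/(e i : ℚ)) := by
    calc (s:ℚ) * (1/2) = ∑ _i : Fin s, (1/2 : ℚ) := by
          simp [Finset.sum_const]
      _ ≤ _ := Finset.sum_le_sum (fun i _ => hlb i)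
  rcases Nat.lt_or_ge g' 1 with hg | hg
  · -- g' = 0
    have hg0 : g' = 0 := by omega
    subst hg0
    simp only [Nat.cast_zero, mul_zero, zero_sub] at hE
    rcases Nat.lt_or_ge s 3 with hs | hs
    · -- s ≤ 2 : contradiction
      have hsum_ub : ∑ i, (1 - 1/(e i : ℚ)) ≤ (s:ℚ) * 1 := by
        calc ∑ i, (1 - 1/(e i : ℚ)) ≤ ∑ _i : Fin s, (1:ℚ) :=
              Finset.sum_le_sum (fun i _ => le_of_lt (hub i))
          _ = (s:ℚ) * 1 := by simp
      have : (s:ℚ) ≤ 2 := by exact_mod_cast Nat.lt_succ_iff.mp hs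
      linarith
    rcases Nat.lt_or_ge s 5 with hs5 | hs5
    · interval_cases s
      · -- s = 3
        rw [Fin.sum_univ_three] at hE
        have h1 := key_sym (e 0) (e 1) (e 2) (he 0) (he 1) (he 2) (by linarith)
        linarith
      · -- s = 4
        rw [Fin.sum_univ_four] at hE
        have key4 : ∀ i : Fin 4, (1:ℚ) - 1/(e i) = 1/2 ∨ (2:ℚ)/3 ≤ 1 - 1/(e i) := by
          intro i
          rcases Nat.lt_or_ge (e i) 3 with h3 | h3
          · left
            have : e i = 2 := by have := he i; omega
            rw [this]; norm_num
          · right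
            have := inv_le_inv_nat (show 0 < 3 by norm_num) h3
            norm_num at this ⊢
            linarith
        rcases key4 0 with h0 | h0 <;> rcases key4 1 with h1 | h1 <;>
          rcases key4 2 with h2 | h2 <;> rcases key4 3 with h3 | h3 <;>
          [skip; skip; skip; skip; skip; skip; skip; skip;
           skip; skip; skip; skip; skip; skip; skip; skip] <;>
          linarith [hlb 0, hlb 1, hlb 2, hlb 3]
    · -- s ≥ 5
      have : (5:ℚ) ≤ s := by exact_mod_cast hs5
      linarith
  · -- g' ≥ 1
    rcases Nat.lt_or_ge g' 2 with hg2 | hg2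
    · have hg1 : g' = 1 := by omega
      subst hg1
      simp only [Nat.cast_one, mul_one] at hE
      rcases Nat.eq_zero_or_pos s with hs0 | hs0
      · subst hs0
        simp at hE
        linarith
      · have : (1:ℚ) ≤ s := by exact_mod_cast hs0
        linarith
    · have : (2:ℚ) ≤ g' := by exact_mod_cast hg2
      have : (0:ℚ) ≤ (s:ℚ) * (1/2) := by positivity
      linarith
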